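/- arXiv:2202.03719 — 2 statements merged into one kernel-verified Lean document; each statement's English description precedes it below -/
import Mathlib

section
/- Let q ≥ 1, δ > 0, and F(A) = (‖A‖² + δ²)^{(q-2)/2} A on n×n real matrices. Then for all C, D: (F(C) − F(D)) : (C − D) = ∫₀¹ [ (‖D + s(C−D)‖² + δ²)^{(q-2)/2} ‖C−D‖² + (q−2)(‖D + s(C−D)‖² + δ²)^{(q-4)/2} ((D + s(C−D)) : (C−D))² ] ds, and this integrand is bounded below by (‖D+s(C−D)‖²+δ²)^{(q-4)/2} ( min(1, q−1) ‖D+s(C−D)‖² + δ² ) ‖C−D‖² ≥ 0. -/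
/-!
Write `γ s = D + s • (C - D)` and `F = ∇Φ`. The derivative of `s ↦ ⟪F (γ s), C - D⟫` is the
second derivative `D²Φ(γ s)[C - D, C - D]`, so the identity is the fundamental theorem of calculus
on `[0, 1]`. For the bound,
`D²Φ(A)[V, V] = (‖A‖² + δ²)^((q-4)/2) ((‖A‖² + δ²) ‖V‖² + (q - 2) ⟪A, V⟫²)`; for `q ≥ 2` the last
term can be dropped, and for `q < 2` Cauchy–Schwarz `⟪A, V⟫² ≤ ‖A‖² ‖V‖²` bounds it below by
`(q - 2) ‖A‖² ‖V‖²`. Matrices are treated as vectors of `ℓ²(n × n)`, where the norm and inner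
product are the Frobenius ones.
-/

open Finset intervalIntegral
open scoped RealInnerProductSpace

section RegularizedPower

variable {E : Type*} [NormedAddCommGroup E] [InnerProductSpace ℝ E] {q δ : ℝ}

/-- The gradient of `Φ(A) = (1/q)(‖A‖² + δ²)^{q/2}`. -/
noncomputable def regularizedPowerMap (q δ : ℝ) (A : E) : E :=
  (‖A‖ ^ 2 + δ ^ 2) ^ ((q - 2) / 2) • A

/-- `D²Φ(A)[V, V]`, the second derivative of `Φ` at `A` in direction `V`. -/
noncomputable def regularizedPowerHessian (q δ : ℝ) (A V : E) : ℝ :=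
  (‖A‖ ^ 2 + δ ^ 2) ^ ((q - 2) / 2) * ‖V‖ ^ 2
    + (q - 2) * (‖A‖ ^ 2 + δ ^ 2) ^ ((q - 4) / 2) * ⟪A, V⟫ ^ 2

theorem hasDerivAt_inner_regularizedPowerMap_lineMap (hδ : δ ≠ 0) (B V : E) (s : ℝ) :
    HasDerivAt (fun t : ℝ => ⟪regularizedPowerMap q δ (B + t • V), V⟫)
      (regularizedPowerHessian q δ (B + s • V) V) s := by
  have hγ : HasDerivAt (fun t : ℝ => B + t • V) V s := by
    simpa using ((hasDerivAt_id s).smul_const V).const_add B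
  have hpos : 0 < ‖B + s • V‖ ^ 2 + δ ^ 2 := by positivity
  have hw := ((hγ.norm_sq.add_const (δ ^ 2)).rpow_const (p := (q - 2) / 2)
    (Or.inl hpos.ne')).fun_mul (hγ.inner ℝ (hasDerivAt_const s V))
  simp only [regularizedPowerMap, real_inner_smul_left]
  refine hw.congr_deriv ?_
  simp only [regularizedPowerHessian, inner_zero_right, zero_add, real_inner_self_eq_norm_sq]
  rw [show (q - 2) / 2 - 1 = (q - 4) / 2 by ring]
  ring

theorem continuous_regularizedPowerHessian_lineMap (hδ : δ ≠ 0) (B V : E) :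
    Continuous (fun s : ℝ => regularizedPowerHessian q δ (B + s • V) V) := by
  have hbase : Continuous (fun s : ℝ => ‖B + s • V‖ ^ 2 + δ ^ 2) := by fun_prop
  have hne : ∀ s : ℝ, ‖B + s • V‖ ^ 2 + δ ^ 2 ≠ 0 := fun s => by positivity
  unfold regularizedPowerHessian
  have h1 := hbase.rpow_const (p := (q - 2) / 2) fun s => Or.inl (hne s)
  have h2 := hbase.rpow_const (p := (q - 4) / 2) fun s => Or.inl (hne s)
  fun_prop

theorem inner_sub_regularizedPowerMap_eq_integral (hδ : δ ≠ 0) (C D : E) :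
    ⟪regularizedPowerMap q δ C - regularizedPowerMap q δ D, C - D⟫
      = ∫ s in (0 : ℝ)..1, regularizedPowerHessian q δ (D + s • (C - D)) (C - D) := by
  rw [integral_eq_sub_of_hasDerivAt
    (fun s _ => hasDerivAt_inner_regularizedPowerMap_lineMap hδ D (C - D) s)
    ((continuous_regularizedPowerHessian_lineMap hδ D (C - D)).intervalIntegrable 0 1)]
  simp [inner_sub_left]

theorem min_one_sub_one_mul_le_add_mul_sq {q N e P : ℝ} (hP : P ^ 2 ≤ N * e) :
    min 1 (q - 1) * N * e ≤ N * e + (q - 2) * P ^ 2 := by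
  rcases le_total q 2 with hq2 | hq2
  · rw [min_eq_right (by linarith)]
    nlinarith [mul_le_mul_of_nonpos_left hP (by linarith : q - 2 ≤ 0)]
  · rw [min_eq_left (by linarith)]
    nlinarith [mul_nonneg (by linarith : (0 : ℝ) ≤ q - 2) (sq_nonneg P)]

theorem regularizedPowerHessian_lower_bound (hδ : δ ≠ 0) (A V : E) :
    (‖A‖ ^ 2 + δ ^ 2) ^ ((q - 4) / 2) * (min 1 (q - 1) * ‖A‖ ^ 2 + δ ^ 2) * ‖V‖ ^ 2
      ≤ regularizedPowerHessian q δ A V := by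
  have hpos : 0 < ‖A‖ ^ 2 + δ ^ 2 := by positivity
  have hcs : ⟪A, V⟫ ^ 2 ≤ ‖A‖ ^ 2 * ‖V‖ ^ 2 := by
    rw [← mul_pow]
    exact sq_le_sq' (neg_le_of_abs_le (abs_real_inner_le_norm A V)) (real_inner_le_norm A V)
  have hsplit : (‖A‖ ^ 2 + δ ^ 2) ^ ((q - 2) / 2)
      = (‖A‖ ^ 2 + δ ^ 2) ^ ((q - 4) / 2) * (‖A‖ ^ 2 + δ ^ 2) := by
    rw [← Real.rpow_add_one hpos.ne']; ring_nf
  have key := min_one_sub_one_mul_le_add_mul_sq (q := q) hcs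
  rw [regularizedPowerHessian, hsplit]
  nlinarith [mul_le_mul_of_nonneg_left key (Real.rpow_nonneg hpos.le ((q - 4) / 2))]

end RegularizedPower

section Frobenius

variable {m n : Type*}

noncomputable def Matrix.toFrobenius (M : Matrix m n ℝ) : EuclideanSpace ℝ (m × n) :=
  WithLp.toLp 2 (Function.uncurry M)

@[simp]
theorem Matrix.toFrobenius_apply (M : Matrix m n ℝ) (p : m × n) : M.toFrobenius p = M p.1 p.2 :=
  rfl

variable [Fintype m] [Fintype n]

theorem EuclideanSpace.norm_sq_eq_sum_prod (x : EuclideanSpace ℝ (m × n)) :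
    ‖x‖ ^ 2 = ∑ i, ∑ j, x (i, j) ^ 2 := by
  rw [EuclideanSpace.real_norm_sq_eq, Fintype.sum_prod_type]

theorem EuclideanSpace.inner_eq_sum_prod (x y : EuclideanSpace ℝ (m × n)) :
    ⟪x, y⟫ = ∑ i, ∑ j, x (i, j) * y (i, j) := by
  simp only [PiLp.inner_apply, RCLike.inner_apply, conj_trivial, Fintype.sum_prod_type, mul_comm]

end Frobenius

/-- Integral representation and lower bound for the monotonicity of
`F(A) = (‖A‖²+δ²)^{(q-2)/2} A` (Frobenius norm `‖·‖` and inner product `:`). -/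
theorem stmt_2 (n : ℕ) (q δ : ℝ) (hq : 1 ≤ q) (hδ : 0 < δ)
    (C D : Matrix (Fin n) (Fin n) ℝ) :
    (∑ i, ∑ j,
        (((∑ k, ∑ l, (C k l) ^ 2) + δ ^ 2) ^ ((q - 2) / 2) * C i j
          - ((∑ k, ∑ l, (D k l) ^ 2) + δ ^ 2) ^ ((q - 2) / 2) * D i j)
        * (C i j - D i j))
      = ∫ s in (0:ℝ)..1,
          (((∑ k, ∑ l, (D k l + s * (C k l - D k l)) ^ 2) + δ ^ 2) ^ ((q - 2) / 2)
              * (∑ i, ∑ j, (C i j - D i j) ^ 2)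
            + (q - 2) *
              ((∑ k, ∑ l, (D k l + s * (C k l - D k l)) ^ 2) + δ ^ 2) ^ ((q - 4) / 2)
              * (∑ i, ∑ j, (D i j + s * (C i j - D i j)) * (C i j - D i j)) ^ 2)
    ∧ ∀ s ∈ Set.Icc (0:ℝ) 1,
        (((∑ k, ∑ l, (D k l + s * (C k l - D k l)) ^ 2) + δ ^ 2) ^ ((q - 2) / 2)
              * (∑ i, ∑ j, (C i j - D i j) ^ 2)
            + (q - 2) *
              ((∑ k, ∑ l, (D k l + s * (C k l - D k l)) ^ 2) + δ ^ 2) ^ ((q - 4) / 2)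
              * (∑ i, ∑ j, (D i j + s * (C i j - D i j)) * (C i j - D i j)) ^ 2)
          ≥ ((∑ k, ∑ l, (D k l + s * (C k l - D k l)) ^ 2) + δ ^ 2) ^ ((q - 4) / 2)
              * (min 1 (q - 1) * (∑ k, ∑ l, (D k l + s * (C k l - D k l)) ^ 2) + δ ^ 2)
              * (∑ i, ∑ j, (C i j - D i j) ^ 2)
        ∧ ((∑ k, ∑ l, (D k l + s * (C k l - D k l)) ^ 2) + δ ^ 2) ^ ((q - 4) / 2)
              * (min 1 (q - 1) * (∑ k, ∑ l, (D k l + s * (C k l - D k l)) ^ 2) + δ ^ 2)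
              * (∑ i, ∑ j, (C i j - D i j) ^ 2) ≥ 0 := by
  have hid := inner_sub_regularizedPowerMap_eq_integral (q := q) hδ.ne'
    C.toFrobenius D.toFrobenius
  have hlow := fun s : ℝ => regularizedPowerHessian_lower_bound (q := q) hδ.ne'
    (D.toFrobenius + s • (C.toFrobenius - D.toFrobenius)) (C.toFrobenius - D.toFrobenius)
  simp only [regularizedPowerHessian, regularizedPowerMap, EuclideanSpace.norm_sq_eq_sum_prod,
    EuclideanSpace.inner_eq_sum_prod, PiLp.add_apply, PiLp.sub_apply, PiLp.smul_apply,
    smul_eq_mul, Matrix.toFrobenius_apply] at hid hlow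
  have hmin : 0 ≤ min 1 (q - 1) := le_min zero_le_one (by linarith)
  exact ⟨hid, fun s _ => ⟨hlow s, by positivity⟩⟩
end

section
/- Let μ > 0 and τ* ≥ 0. Suppose S, S̄ ∈ ℝ and a, b ∈ ℝ satisfy the one-dimensional Bingham constitutive relation: S = μ a + τ* a/|a| if a ≠ 0 and |S| ≤ τ* if a = 0, and likewise S̄ = μ b + τ* b/|b| if b ≠ 0 and |S̄| ≤ τ* if b = 0. Then (S − S̄)(a − b) ≥ μ (a − b)². -/
/-! The Bingham law says that `S - μ a` lies in `τ ∂|·|(a)`, the subdifferential of the convex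
function `τ |·|` at `a`. Subdifferentials of convex functions are monotone, so
`(S - S̄)(a - b) = μ (a - b)² + (σ - σ̄)(a - b)` with `(σ - σ̄)(a - b) ≥ 0`. -/

/-- `σ ∈ τ ∂|·|(a)`: for `τ ≥ 0` this is `σ = τ sign a` when `a ≠ 0` and `|σ| ≤ τ` when `a = 0`. -/
def IsAbsSubgradient (τ a σ : ℝ) : Prop :=
  |σ| ≤ τ ∧ σ * a = τ * |a|

namespace IsAbsSubgradient

theorem of_ne_zero {τ a : ℝ} (hτ : 0 ≤ τ) (ha : a ≠ 0) : IsAbsSubgradient τ a (τ * a / |a|) := by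
  have ha' : |a| ≠ 0 := abs_ne_zero.mpr ha
  constructor
  · rw [abs_div, abs_mul, abs_abs, abs_of_nonneg hτ, mul_div_assoc, div_self ha', mul_one]
  · rw [div_mul_eq_mul_div, mul_assoc, ← abs_mul_abs_self a, ← mul_assoc, mul_div_assoc,
      div_self ha', mul_one]

theorem of_zero {τ σ : ℝ} (hσ : |σ| ≤ τ) : IsAbsSubgradient τ 0 σ :=
  ⟨hσ, by simp⟩

theorem mul_le {τ a σ : ℝ} (h : IsAbsSubgradient τ a σ) (b : ℝ) : σ * b ≤ τ * |b| :=
  calc σ * b ≤ |σ| * |b| := by rw [← abs_mul]; exact le_abs_self _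
    _ ≤ τ * |b| := mul_le_mul_of_nonneg_right h.1 (abs_nonneg b)

theorem monotone {τ a b σ σ' : ℝ} (h : IsAbsSubgradient τ a σ) (h' : IsAbsSubgradient τ b σ') :
    0 ≤ (σ - σ') * (a - b) := by
  have hσ := h.mul_le b
  have hσ' := h'.mul_le a
  have hexpand : (σ - σ') * (a - b) = σ * a + σ' * b - σ * b - σ' * a := by ring
  rw [hexpand, h.2, h'.2]
  linarith

end IsAbsSubgradient

theorem isAbsSubgradient_of_bingham {μ τ S a : ℝ} (hτ : 0 ≤ τ)
    (hS1 : a ≠ 0 → S = μ * a + τ * a / |a|) (hS2 : a = 0 → |S| ≤ τ) :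
    IsAbsSubgradient τ a (S - μ * a) := by
  by_cases ha : a = 0
  · subst ha
    simpa using IsAbsSubgradient.of_zero (hS2 rfl)
  · rw [hS1 ha, add_sub_cancel_left]
    exact IsAbsSubgradient.of_ne_zero hτ ha

theorem stmt_4_general (μ τ : ℝ) (hτ : 0 ≤ τ)
    (S Sb a b : ℝ)
    (hS1 : a ≠ 0 → S = μ * a + τ * a / |a|)
    (hS2 : a = 0 → |S| ≤ τ)
    (hSb1 : b ≠ 0 → Sb = μ * b + τ * b / |b|)
    (hSb2 : b = 0 → |Sb| ≤ τ) :
    (S - Sb) * (a - b) ≥ μ * (a - b) ^ 2 := by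
  have hyield := (isAbsSubgradient_of_bingham hτ hS1 hS2).monotone
    (isAbsSubgradient_of_bingham hτ hSb1 hSb2)
  have hsplit : (S - Sb) * (a - b) = μ * (a - b) ^ 2 + (S - μ * a - (Sb - μ * b)) * (a - b) := by
    ring
  rw [hsplit]
  linarith

/-- Monotonicity of the (multivalued) one-dimensional Bingham constitutive law. -/
theorem stmt_4 (μ τ : ℝ) (hμ : 0 < μ) (hτ : 0 ≤ τ)
    (S Sb a b : ℝ)
    (hS1 : a ≠ 0 → S = μ * a + τ * a / |a|)
    (hS2 : a = 0 → |S| ≤ τ)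
    (hSb1 : b ≠ 0 → Sb = μ * b + τ * b / |b|)
    (hSb2 : b = 0 → |Sb| ≤ τ) :
    (S - Sb) * (a - b) ≥ μ * (a - b) ^ 2 :=
  stmt_4_general μ τ hτ S Sb a b hS1 hS2 hSb1 hSb2
end
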